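/- arXiv:2508.05110 — 4 statements merged into one kernel-verified Lean document; each statement's English description precedes it below -/
import Mathlib

section
/- Let ε > 0, let b ≥ 1, v ≥ 3 and 1 ≤ k ≤ v−1 be integers, and let s > 0. Let Q be a b×v real matrix such that (i) every entry of Q lies in {s, s·e^ε}, (ii) every column of Q sums to 1, (iii) every row of Q has exactly k entries equal to s·e^ε, and (iv) there exist real numbers α, β with QᵀQ = α·I + β·J. Define the 0-1 matrix A by A_{ij} = 1 if Q_{ij} = s·e^ε and A_{ij} = 0 otherwise, so that Q = s((e^ε − 1)·A + J'). Then every column of A sums to the same value r = b·k/v, and any two distinct columns of A have exactly λ = r(k−1)/(v−1) rows in which both equal 1; that is, A is the incidence matrix of a (b, v, r, k, λ)-balanced incomplete block design (A·1_v = k·1_b and AᵀA = (r−λ)·I + λ·J). -/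
open Matrix Finset Real

/-- The all-ones `b × v` matrix (denoted `J'` for rectangular, `J` when square). -/
def allOnes (b v : ℕ) : Matrix (Fin b) (Fin v) ℝ := Matrix.of fun _ _ => 1

/-- an optimal LDP transition probability matrix (binary entries with
ratio `e^ε`, column sums 1, constant row count `k` of large entries, and Gram matrix
of the form `α I + β J`) must come from a balanced incomplete block design. -/
theorem stmt_0 (ε : ℝ) (hε : 0 < ε) (b v k : ℕ) (hb : 1 ≤ b) (hv : 3 ≤ v)
    (hk1 : 1 ≤ k) (hkv : k ≤ v - 1) (s : ℝ) (hs : 0 < s)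
    (Q : Matrix (Fin b) (Fin v) ℝ)
    (hentries : ∀ i j, Q i j = s ∨ Q i j = s * Real.exp ε)
    (hcol : ∀ j, ∑ i, Q i j = 1)
    (hrow : ∀ i, (Finset.univ.filter fun j => Q i j = s * Real.exp ε).card = k)
    (α β : ℝ)
    (hgram : Qᵀ * Q = α • (1 : Matrix (Fin v) (Fin v) ℝ) + β • allOnes v v)
    (A : Matrix (Fin b) (Fin v) ℝ)
    (hA : ∀ i j, A i j = if Q i j = s * Real.exp ε then 1 else 0)
    (hQA : Q = s • ((Real.exp ε - 1) • A + allOnes b v)) :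
    (∀ j, ∑ i, A i j = (b : ℝ) * k / v) ∧
    (∀ j j' : Fin v, j ≠ j' →
      ((Finset.univ.filter fun i => A i j = 1 ∧ A i j' = 1).card : ℝ) =
        ((b : ℝ) * k / v) * ((k : ℝ) - 1) / ((v : ℝ) - 1)) ∧
    (A.mulVec (fun _ => 1) = fun _ => (k : ℝ)) ∧
    (Aᵀ * A =
      ((b : ℝ) * k / v - ((b : ℝ) * k / v) * ((k : ℝ) - 1) / ((v : ℝ) - 1)) •
          (1 : Matrix (Fin v) (Fin v) ℝ) +
        (((b : ℝ) * k / v) * ((k : ℝ) - 1) / ((v : ℝ) - 1)) • allOnes v v) := by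
  classical
  set c := Real.exp ε - 1 with hc
  have hc0 : 0 < c := by
    have h1 : (1:ℝ) < Real.exp ε := by
      have := Real.exp_lt_exp.mpr hε; simpa using this
    simp only [hc]; linarith
  have hv0 : (0:ℝ) < v := by positivity
  have hv1 : (v:ℝ) - 1 ≠ 0 := by
    have : (3:ℝ) ≤ v := by exact_mod_cast hv
    linarith
  -- entry formula for Q
  have hQ : ∀ i j, Q i j = s * (c * A i j + 1) := by
    intro i j
    rw [hQA]
    simp [allOnes, Matrix.smul_apply, Matrix.add_apply, hc]
  -- A is 0-1
  have hA01 : ∀ i j, A i j = 0 ∨ A i j = 1 := by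
    intro i j; rw [hA]; split <;> simp
  have hAsq : ∀ i j, A i j * A i j = A i j := by
    intro i j; rcases hA01 i j with h | h <;> rw [h] <;> ring
  -- row sums of A are k
  have hArow : ∀ i, ∑ j, A i j = (k : ℝ) := by
    intro i
    calc ∑ j, A i j = ∑ j, (if Q i j = s * Real.exp ε then (1:ℝ) else 0) := by
          exact Finset.sum_congr rfl fun j _ => hA i j
      _ = ((Finset.univ.filter fun j => Q i j = s * Real.exp ε).card : ℝ) := by
          rw [Finset.sum_boole]
      _ = k := by rw [hrow i]
  -- expansion of column sums of Q
  have hexpand : ∀ j, ∑ i, Q i j = s * c * (∑ i, A i j) + s * b := by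
    intro j
    calc ∑ i, Q i j = ∑ i, (s * c * A i j + s) :=
          Finset.sum_congr rfl fun i _ => by rw [hQ]; ring
      _ = s * c * (∑ i, A i j) + s * b := by
          rw [Finset.sum_add_distrib, ← Finset.mul_sum, Finset.sum_const, Finset.card_univ,
            Fintype.card_fin, nsmul_eq_mul]
          ring
  have hsc : s * c ≠ 0 := by positivity
  -- column sums of A are all equal
  have hconstcol : ∀ j j' : Fin v, ∑ i, A i j = ∑ i, A i j' := by
    intro j j'
    have h1 := hcol j; have h2 := hcol j'
    rw [hexpand] at h1 h2
    have : s * c * (∑ i, A i j) = s * c * (∑ i, A i j') := by linarith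
    exact mul_left_cancel₀ hsc this
  -- total sum
  have htot : ∑ j, ∑ i, A i j = (b:ℝ) * k := by
    rw [Finset.sum_comm]
    calc ∑ i, ∑ j, A i j = ∑ i : Fin b, (k:ℝ) :=
          Finset.sum_congr rfl fun i _ => hArow i
      _ = (b:ℝ) * k := by
          rw [Finset.sum_const, Finset.card_univ, Fintype.card_fin, nsmul_eq_mul]
  set r : ℝ := (b:ℝ) * k / v with hr
  have hAcol : ∀ j, ∑ i, A i j = r := by
    intro j
    have hvmul : (v:ℝ) * (∑ i, A i j) = (b:ℝ) * k := by
      calc (v:ℝ) * (∑ i, A i j) = ∑ _j' : Fin v, (∑ i, A i j) := by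
            rw [Finset.sum_const, Finset.card_univ, Fintype.card_fin, nsmul_eq_mul]
        _ = ∑ j', ∑ i, A i j' := Finset.sum_congr rfl fun j' _ => hconstcol j j'
        _ = (b:ℝ) * k := htot
    rw [hr, eq_div_iff (ne_of_gt hv0)]
    linarith
  -- Gram entries
  have hGram' : ∀ j j', ∑ i, Q i j * Q i j' = α * (if j = j' then 1 else 0) + β := by
    intro j j'
    have h := Matrix.ext_iff.2 hgram j j'
    simpa [Matrix.mul_apply, Matrix.transpose_apply, Matrix.one_apply, allOnes,
      Matrix.add_apply, Matrix.smul_apply] using h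
  -- off-diagonal entries of AᵀA are constant
  set μ : ℝ := (β - 2 * (s^2 * c) * r - s^2 * b) / (s^2 * c^2) with hμ
  have hN : ∀ j j', j ≠ j' → ∑ i, A i j * A i j' = μ := by
    intro j j' hne
    have h := hGram' j j'
    rw [if_neg hne] at h
    have hexp2 : ∑ i, Q i j * Q i j' =
        s^2 * c^2 * (∑ i, A i j * A i j') + s^2 * c * (∑ i, A i j)
          + s^2 * c * (∑ i, A i j') + s^2 * b := by
      calc ∑ i, Q i j * Q i j'
          = ∑ i, (s^2 * c^2 * (A i j * A i j') + s^2 * c * A i j + s^2 * c * A i j' + s^2) :=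
            Finset.sum_congr rfl fun i _ => by rw [hQ, hQ]; ring
        _ = _ := by
            rw [Finset.sum_add_distrib, Finset.sum_add_distrib, Finset.sum_add_distrib,
              ← Finset.mul_sum, ← Finset.mul_sum, ← Finset.mul_sum, Finset.sum_const,
              Finset.card_univ, Fintype.card_fin, nsmul_eq_mul]
            ring
    rw [hexp2, hAcol, hAcol] at h
    have hsc2 : s^2 * c^2 ≠ 0 := by positivity
    rw [hμ, eq_div_iff hsc2]
    linarith [h]
  -- compute μ
  have hμval : μ = r * ((k:ℝ) - 1) / ((v:ℝ) - 1) := by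
    obtain ⟨j⟩ : Nonempty (Fin v) := ⟨⟨0, by omega⟩⟩
    have hrowN : ∑ j', ∑ i, A i j * A i j' = r * k := by
      rw [Finset.sum_comm]
      calc ∑ i, ∑ j', A i j * A i j' = ∑ i, A i j * (k:ℝ) := by
            refine Finset.sum_congr rfl fun i _ => ?_
            rw [← Finset.mul_sum, hArow]
        _ = (∑ i, A i j) * k := by rw [← Finset.sum_mul]
        _ = r * k := by rw [hAcol]
    have hsplit : ∑ j', ∑ i, A i j * A i j'
        = (∑ i, A i j * A i j) + ∑ j' ∈ Finset.univ.erase j, ∑ i, A i j * A i j' := by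
      rw [← Finset.add_sum_erase _ _ (Finset.mem_univ j)]
    have hdiag : ∑ i, A i j * A i j = r := by
      rw [Finset.sum_congr rfl fun i _ => hAsq i j, hAcol]
    have herase : ∑ j' ∈ Finset.univ.erase j, ∑ i, A i j * A i j' = ((v:ℝ) - 1) * μ := by
      calc ∑ j' ∈ Finset.univ.erase j, ∑ i, A i j * A i j'
          = ∑ _j' ∈ Finset.univ.erase j, μ :=
            Finset.sum_congr rfl fun j' hj' => hN j j' (Ne.symm (Finset.ne_of_mem_erase hj'))
        _ = ((v:ℝ) - 1) * μ := by
            rw [Finset.sum_const, Finset.card_erase_of_mem (Finset.mem_univ j),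
              Finset.card_univ, Fintype.card_fin, nsmul_eq_mul]
            have : 1 ≤ v := by omega
            push_cast [this]
            ring
    have hkey : r + ((v:ℝ) - 1) * μ = r * k := by
      rw [hrowN, hdiag, herase] at hsplit
      linarith
    rw [eq_div_iff hv1]
    linarith
  refine ⟨hAcol, ?_, ?_, ?_⟩
  · intro j j' hne
    have : ((Finset.univ.filter fun i => A i j = 1 ∧ A i j' = 1).card : ℝ)
        = ∑ i, A i j * A i j' := by
      rw [← Finset.sum_boole]
      refine Finset.sum_congr rfl fun i _ => ?_
      rcases hA01 i j with h1 | h1 <;> rcases hA01 i j' with h2 | h2 <;>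
        simp [h1, h2]
    rw [this, hN j j' hne, hμval]
  · funext i
    simp only [Matrix.mulVec, dotProduct]
    simpa using hArow i
  · ext j j'
    simp only [Matrix.mul_apply, Matrix.transpose_apply, Matrix.add_apply, Matrix.smul_apply,
      Matrix.one_apply, allOnes, Matrix.of_apply, smul_eq_mul]
    by_cases h : j = j'
    · subst h
      rw [if_pos rfl]
      have hdiag : ∑ i, A i j * A i j = r := by
        rw [Finset.sum_congr rfl fun i _ => hAsq i j, hAcol]
      rw [hdiag]; rw [hr]; ring
    · rw [if_neg h, hN j j' h, hμval]; ring
end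

section
/- Let ε > 0, let b, v, r, k, λ be positive integers with v ≥ 3, 1 ≤ k ≤ v−1, b·k = v·r and r(k−1) = λ(v−1), and let A be a 0-1 b×v matrix with A·1_v = k·1_b and AᵀA = (r−λ)·I + λ·J (the incidence matrix of a (b, v, r, k, λ)-BIBD). Set p = 1/(r(e^ε − 1) + b) and Q = p·((e^ε − 1)·A + J'). Then: (i) every entry of Q lies in {p, p·e^ε} and every column of Q sums to 1 (so Q is the transition probability matrix of an ε-locally-differentially-private randomiser); and (ii) b·QᵀQ = a·I + (1 − a/v)·J, where a = v·k(v−k)(e^ε − 1)² / ((v−1)(v + k(e^ε − 1))²). -/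
open Matrix Finset Real

/-- Block Design Randomised Response. If `A` is the incidence matrix of a
`(b, v, r, k, λ)`-BIBD and `Q = p((e^ε - 1)A + J')` with `p = 1/(r(e^ε - 1) + b)`, then
`Q` is a column-stochastic matrix with entries in `{p, p·e^ε}` (an `ε`-LDP randomiser),
and `b·QᵀQ = a·I + (1 - a/v)·J` for
`a = v·k(v-k)(e^ε - 1)² / ((v-1)(v + k(e^ε - 1))²)`. -/
theorem stmt_5 (ε : ℝ) (hε : 0 < ε) (b v r k lam : ℕ)
    (hb : 0 < b) (hv : 3 ≤ v) (hr : 0 < r) (hk : 0 < k) (hlam : 0 < lam)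
    (hkv : k ≤ v - 1) (hbk : b * k = v * r) (hrk : r * (k - 1) = lam * (v - 1))
    (A : Matrix (Fin b) (Fin v) ℝ) (h01 : ∀ i j, A i j = 0 ∨ A i j = 1)
    (hrow : A.mulVec (fun _ => 1) = fun _ => (k : ℝ))
    (hgram : Aᵀ * A =
      ((r : ℝ) - lam) • (1 : Matrix (Fin v) (Fin v) ℝ) + (lam : ℝ) • allOnes v v) :
    let p : ℝ := 1 / ((r : ℝ) * (Real.exp ε - 1) + b)
    let Q : Matrix (Fin b) (Fin v) ℝ := p • ((Real.exp ε - 1) • A + allOnes b v)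
    let a : ℝ := (v : ℝ) * k * ((v : ℝ) - k) * (Real.exp ε - 1) ^ 2 /
      (((v : ℝ) - 1) * ((v : ℝ) + k * (Real.exp ε - 1)) ^ 2)
    (∀ i j, Q i j = p ∨ Q i j = p * Real.exp ε) ∧
    (∀ j, ∑ i, Q i j = 1) ∧
    (b : ℝ) • (Qᵀ * Q) =
      a • (1 : Matrix (Fin v) (Fin v) ℝ) + (1 - a / v) • allOnes v v := by
  intro p Q a
  set c : ℝ := Real.exp ε - 1 with hc
  have hcpos : 0 < c := by
    have h1 : (1:ℝ) < Real.exp ε := by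
      calc (1:ℝ) = Real.exp 0 := Real.exp_zero.symm
      _ < Real.exp ε := Real.exp_lt_exp.mpr hε
    simp only [hc]; linarith
  -- entry formula for Q
  have hQ : ∀ i j, Q i j = p * (c * A i j + 1) := by
    intro i j
    simp [Q, allOnes, Matrix.smul_apply, Matrix.add_apply]
    ring
  -- column sums of A
  have hcol : ∀ j, ∑ i, A i j = (r : ℝ) := by
    intro j
    have := congrFun (congrFun hgram j) j
    simp only [Matrix.mul_apply, Matrix.transpose_apply, Matrix.add_apply,
      Matrix.smul_apply, Matrix.one_apply_eq, allOnes, Matrix.of_apply,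
      smul_eq_mul, mul_one] at this
    have h2 : ∑ i, A i j * A i j = ∑ i, A i j := by
      apply Finset.sum_congr rfl
      intro i _
      rcases h01 i j with h | h <;> simp [h]
    rw [h2] at this
    linarith
  -- positivity facts
  have hvR : (3:ℝ) ≤ (v:ℝ) := by exact_mod_cast hv
  have hkR : (1:ℝ) ≤ (k:ℝ) := by exact_mod_cast hk
  have hbR : (1:ℝ) ≤ (b:ℝ) := by exact_mod_cast hb
  have hrR : (1:ℝ) ≤ (r:ℝ) := by exact_mod_cast hr
  have hden : (r : ℝ) * c + b > 0 := by positivity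
  have hp : p = 1 / ((r : ℝ) * c + b) := rfl
  have hppos : 0 < p := by rw [hp]; positivity
  refine ⟨?_, ?_, ?_⟩
  · intro i j
    rcases h01 i j with h | h
    · left; rw [hQ i j, h]; ring
    · right; rw [hQ i j, h, mul_one]
      rw [show c + 1 = Real.exp ε by simp [hc]]
  · intro j
    have : ∑ i, Q i j = p * (c * (r:ℝ) + b) := by
      simp only [hQ]
      rw [← Finset.mul_sum]
      congr 1
      rw [Finset.sum_add_distrib, ← Finset.mul_sum, hcol j]
      simp [mul_comm]
    rw [this, hp]
    field_simp
  · -- main matrix identity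
    -- cast relations
    have hkv' : (k:ℝ) ≤ (v:ℝ) - 1 := by
      have : (k:ℝ) ≤ ((v-1 : ℕ):ℝ) := by exact_mod_cast hkv
      rw [Nat.cast_sub (by omega)] at this
      push_cast at this
      exact this
    have hbkR : (b:ℝ) * k = (v:ℝ) * r := by exact_mod_cast hbk
    have hrkR : (r:ℝ) * ((k:ℝ) - 1) = (lam:ℝ) * ((v:ℝ) - 1) := by
      have := hrk
      have h1 : ((r * (k-1) : ℕ) : ℝ) = ((lam * (v-1) : ℕ) : ℝ) := by exact_mod_cast this
      rw [Nat.cast_mul, Nat.cast_mul, Nat.cast_sub (by omega), Nat.cast_sub (by omega)] at h1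
      simpa using h1
    have hv1 : (0:ℝ) < (v:ℝ) - 1 := by linarith
    have hvkc : (0:ℝ) < (v:ℝ) + k * c := by positivity
    have hRv : (r:ℝ) = (b:ℝ) * k / v := by field_simp; linarith [hbkR]
    have hLv : (lam:ℝ) = (r:ℝ) * ((k:ℝ)-1) / ((v:ℝ)-1) := by
      field_simp; linarith [hrkR]
    have ha : a = (v:ℝ) * k * ((v:ℝ) - k) * c ^ 2 /
      (((v:ℝ) - 1) * ((v:ℝ) + (k:ℝ) * c) ^ 2) := rfl
    have hvne : ((v:ℝ)-1) ≠ 0 := ne_of_gt hv1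
    have hvkcne : ((v:ℝ) + k*c) ≠ 0 := ne_of_gt hvkc
    have hv0 : (v:ℝ) ≠ 0 := by positivity
    have hbne : (b:ℝ) ≠ 0 := by positivity
    have hdenne : ((b:ℝ)*k/v * c + b) ≠ 0 := by
      rw [hRv] at hden; exact ne_of_gt hden
    ext j l
    have hgjl := congrFun (congrFun hgram j) l
    simp only [Matrix.mul_apply, Matrix.transpose_apply] at hgjl
    have hQQ : ((b:ℝ) • (Qᵀ * Q)) j l
        = (b:ℝ) * (p^2 * (c^2 * (∑ i, A i j * A i l) + c * (r:ℝ) + c * (r:ℝ) + (b:ℝ))) := by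
      simp only [Matrix.smul_apply, Matrix.mul_apply, Matrix.transpose_apply, smul_eq_mul]
      congr 1
      have : ∀ i, Q i j * Q i l = p^2 * (c^2 * (A i j * A i l) + c * A i j + c * A i l + 1) := by
        intro i; rw [hQ i j, hQ i l]; ring
      rw [Finset.sum_congr rfl (fun i _ => this i)]
      rw [← Finset.mul_sum]
      congr 1
      simp only [Finset.sum_add_distrib, ← Finset.mul_sum, hcol j, hcol l]
      simp [mul_add]
    rw [hQQ]
    by_cases hjl : j = l
    · subst hjl
      have hsum : ∑ i, A i j * A i j = (r:ℝ) := by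
        rw [hgjl]
        simp [allOnes, Matrix.add_apply, Matrix.smul_apply]
      rw [hsum]
      simp only [Matrix.add_apply, Matrix.smul_apply, Matrix.one_apply_eq, allOnes,
        Matrix.of_apply, smul_eq_mul, mul_one]
      rw [ha, hp, hRv]
      field_simp
      ring
    · have hsum : ∑ i, A i j * A i l = (lam:ℝ) := by
        rw [hgjl]
        simp [allOnes, Matrix.add_apply, Matrix.smul_apply, Matrix.one_apply, hjl]
      rw [hsum]
      simp only [Matrix.add_apply, Matrix.smul_apply, Matrix.one_apply_ne hjl, allOnes,
        Matrix.of_apply, smul_eq_mul, mul_one, mul_zero, zero_add]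
      rw [ha, hp, hLv, hRv]
      field_simp
      ring
end

section
/- Let v ≥ 2 be an integer and let M be a v×v real symmetric positive definite matrix such that M·1_v = v·1_v and tr(M) = T with T > v. Then tr(M⁻¹) ≥ (v−1)²/(T − v) + 1/v. -/
/-!
Let `P = 1 - J / v` be the orthogonal projection onto the orthogonal complement of the
all-ones vector `𝟙`. Since `𝟙` is an eigenvector of `M` for the eigenvalue `v`, hence of `M⁻¹`
for `1 / v`, we get `tr (M P) = T - v`, `tr (M⁻¹ P) = tr M⁻¹ - 1 / v` and `tr P = v - 1`.
The Cauchy–Schwarz inequality for the inner product `⟪X, Y⟫ = tr (Y M Xᵀ)`, applied to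
`X = P M⁻¹` and `Y = P`, reads `(tr P)² ≤ tr (M⁻¹ P) · tr (M P)`.
-/

open Matrix

theorem Matrix.PosSemidef.trace_mul_mul_transpose_sq_le {n : Type*} [Fintype n]
    {A : Matrix n n ℝ} (hA : A.PosSemidef) (x y : Matrix n n ℝ) :
    (y * A * xᵀ).trace ^ 2 ≤ (x * A * xᵀ).trace * (y * A * yᵀ).trace := by
  let := A.toMatrixSeminormedAddCommGroup hA
  let := A.toMatrixInnerProductSpace hA
  exact (sq (_ : ℝ)).trans_le (real_inner_mul_inner_self_le x y)

theorem Matrix.trace_mul_mul_of_isIdempotentElem {n R : Type*} [Fintype n] [CommSemiring R]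
    {P : Matrix n n R} (hP : IsIdempotentElem P) (B : Matrix n n R) :
    (P * B * P).trace = (B * P).trace := by
  rw [trace_mul_cycle, hP.eq, trace_mul_comm]

theorem Matrix.PosDef.sq_trace_le_trace_mul_mul_trace_inv_mul {n : Type*} [Fintype n]
    [DecidableEq n] {A P : Matrix n n ℝ} (hA : A.PosDef) (hPt : Pᵀ = P)
    (hP : IsIdempotentElem P) :
    P.trace ^ 2 ≤ (A * P).trace * (A⁻¹ * P).trace := by
  have hAt : (A⁻¹)ᵀ = A⁻¹ := by
    rw [transpose_nonsing_inv, ← conjTranspose_eq_transpose_of_trivial, hA.isHermitian.eq]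
  have hAA : A * A⁻¹ = 1 := mul_nonsing_inv A hA.det_pos.ne'.isUnit
  have cs := hA.posSemidef.trace_mul_mul_transpose_sq_le (P * A⁻¹) P
  have hxy : P * A * (P * A⁻¹)ᵀ = P := by
    rw [transpose_mul, hAt, hPt, ← mul_assoc, mul_assoc P A, hAA, mul_one, hP.eq]
  have hxx : P * A⁻¹ * A * (P * A⁻¹)ᵀ = P * A⁻¹ * P := by
    rw [transpose_mul, hAt, hPt, mul_assoc (P * A⁻¹), ← mul_assoc A, hAA, one_mul]
  rw [hxy, hxx, hPt, trace_mul_mul_of_isIdempotentElem hP,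
    trace_mul_mul_of_isIdempotentElem hP, mul_comm] at cs
  exact cs

theorem Matrix.inv_mulVec_eq_inv_smul_of_mulVec_eq_smul {n K : Type*} [Fintype n]
    [DecidableEq n] [Field K] {A : Matrix n n K} (hA : IsUnit A.det) {x : n → K} (hx : x ≠ 0)
    {c : K} (h : A *ᵥ x = c • x) : A⁻¹ *ᵥ x = c⁻¹ • x := by
  have hcx : c • (A⁻¹ *ᵥ x) = x := by
    rw [← mulVec_smul, ← h, mulVec_mulVec, nonsing_inv_mul A hA, one_mulVec]
  have hc : c ≠ 0 := by
    rintro rfl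
    exact hx (by simpa using hcx.symm)
  rw [← hcx, smul_smul, inv_mul_cancel₀ hc, one_smul, hcx]

noncomputable def centeringMatrix (n : Type*) [Fintype n] [DecidableEq n] : Matrix n n ℝ :=
  1 - (Fintype.card n : ℝ)⁻¹ • of fun _ _ => 1

section centeringMatrix

variable {n : Type*} [Fintype n] [DecidableEq n]

theorem centeringMatrix_transpose : (centeringMatrix n)ᵀ = centeringMatrix n := by
  ext i j
  simp [centeringMatrix, one_apply, eq_comm]

variable [Nonempty n]

theorem isIdempotentElem_centeringMatrix : IsIdempotentElem (centeringMatrix n) := by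
  have hcard : (Fintype.card n : ℝ) ≠ 0 := Nat.cast_ne_zero.mpr Fintype.card_ne_zero
  have hJ : ((of fun _ _ => (1 : ℝ)) : Matrix n n ℝ) * of (fun _ _ => 1) =
      (Fintype.card n : ℝ) • of fun _ _ => 1 := by
    ext i j
    simp [mul_apply]
  unfold IsIdempotentElem centeringMatrix
  rw [sub_mul, mul_sub, mul_sub, one_mul, mul_one, one_mul, smul_mul_smul, hJ, smul_smul,
    mul_assoc, inv_mul_cancel₀ hcard, mul_one]
  abel

theorem trace_mul_centeringMatrix {A : Matrix n n ℝ} {c : ℝ}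
    (h : A *ᵥ (fun _ => 1) = fun _ => c) :
    (A * centeringMatrix n).trace = A.trace - c := by
  have hcard : (Fintype.card n : ℝ) ≠ 0 := Nat.cast_ne_zero.mpr Fintype.card_ne_zero
  have hrow : ∀ i, ∑ j, A i j = c := fun i => by
    simpa [mulVec, dotProduct] using congrFun h i
  have hAJ : (A * of fun _ _ => 1).trace = Fintype.card n * c := by
    simp [trace, mul_apply, hrow]
  rw [centeringMatrix, mul_sub, mul_one, Matrix.mul_smul, trace_sub, trace_smul, hAJ, smul_eq_mul,
    inv_mul_cancel_left₀ hcard]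

theorem trace_centeringMatrix : (centeringMatrix n).trace = Fintype.card n - 1 := by
  simpa using trace_mul_centeringMatrix (A := 1) (c := 1) (one_mulVec _)

end centeringMatrix

theorem Matrix.PosDef.sq_card_sub_one_le_mul {n : Type*} [Fintype n] [DecidableEq n] [Nonempty n]
    {A : Matrix n n ℝ} (hA : A.PosDef) {c : ℝ} (h : A *ᵥ (fun _ => 1) = fun _ => c) :
    ((Fintype.card n : ℝ) - 1) ^ 2 ≤ (A.trace - c) * (A⁻¹.trace - c⁻¹) := by
  have hinv : A⁻¹ *ᵥ (fun _ => 1) = fun _ => c⁻¹ := by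
    have hsmul : A *ᵥ (fun _ => 1) = c • fun _ => 1 := by
      rw [h]
      ext
      simp
    rw [inv_mulVec_eq_inv_smul_of_mulVec_eq_smul hA.det_pos.ne'.isUnit
      (Function.ne_iff.mpr ⟨Classical.arbitrary n, one_ne_zero⟩) hsmul]
    ext
    simp
  rw [← trace_centeringMatrix, ← trace_mul_centeringMatrix h, ← trace_mul_centeringMatrix hinv]
  exact hA.sq_trace_le_trace_mul_mul_trace_inv_mul centeringMatrix_transpose
    isIdempotentElem_centeringMatrix

theorem stmt_7_general (v : ℕ) (hv : 2 ≤ v) (M : Matrix (Fin v) (Fin v) ℝ)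
    (hpd : M.PosDef)
    (hone : M.mulVec (fun _ => 1) = fun _ => (v : ℝ))
    (T : ℝ) (hT : M.trace = T) (hTv : (v : ℝ) < T) :
    ((v : ℝ) - 1) ^ 2 / (T - v) + 1 / v ≤ M⁻¹.trace := by
  have : NeZero v := ⟨by omega⟩
  have key := hpd.sq_card_sub_one_le_mul hone
  rw [Fintype.card_fin, hT] at key
  have hgap : ((v : ℝ) - 1) ^ 2 / (T - v) ≤ M⁻¹.trace - (v : ℝ)⁻¹ := by
    rwa [div_le_iff₀ (sub_pos.mpr hTv), mul_comm]
  rw [one_div]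
  linarith

/-- for a symmetric positive definite `v × v` matrix `M` with
`M·1 = v·1` and `tr(M) = T > v`, one has `tr(M⁻¹) ≥ (v-1)²/(T-v) + 1/v`. -/
theorem stmt_7 (v : ℕ) (hv : 2 ≤ v) (M : Matrix (Fin v) (Fin v) ℝ)
    (hsym : M.IsSymm) (hpd : M.PosDef)
    (hone : M.mulVec (fun _ => 1) = fun _ => (v : ℝ))
    (T : ℝ) (hT : M.trace = T) (hTv : (v : ℝ) < T) :
    ((v : ℝ) - 1) ^ 2 / (T - v) + 1 / v ≤ M⁻¹.trace :=
  stmt_7_general v hv M hpd hone T hT hTv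
end

section
/- Let ε > 0, let b ≥ 1, v ≥ 2 and 1 ≤ k ≤ v−1 be integers, and let s > 0. Let Q be a b×v real matrix such that every entry of Q lies in {s, s·e^ε}, every column of Q sums to 1, and every row of Q has exactly k entries equal to s·e^ε. Then s = v/(b(v + k(e^ε − 1))), and b·tr(QᵀQ) = f(k), where f(x) = v²(x·e^{2ε} + v − x)/((x(e^ε − 1) + v)²). Equivalently, since the induced output distribution under uniform input is uniform on b elements (so D_μ⁻¹ = b·I_b), one has tr(Qᵀ·D_μ⁻¹·Q) = f(k). -/
/-!
Each row of `Q` holds `k` entries `s·e^ε` and `v - k` entries `s`, so every row sums to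
`s(v + k(e^ε - 1))` and every row of squares to `s²(k e^{2ε} + v - k)`. Summing all entries by rows
and by columns gives `b·s(v + k(e^ε - 1)) = v`, which determines `s`; `tr(QᵀQ)` is the sum of all
squared entries, and `μ` is the constant vector `1/b`, so `D_μ⁻¹ = b·I`.
-/

open Matrix Finset Real

section TwoValued

variable {ι α R : Type*} [Fintype ι] [DecidableEq α] [CommRing R]

theorem sum_comp_eq_of_two_valued {q : ι → α} {a c : α} (hq : ∀ j, q j = a ∨ q j = c)
    (g : α → R) :
    ∑ j, g (q j) = #{j | q j = c} * g c + (Fintype.card ι - #{j | q j = c}) * g a := by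
  have hcard : (#{j | q j ≠ c} : R) = Fintype.card ι - #{j | q j = c} := by
    rw [eq_sub_iff_add_eq', ← Nat.cast_add, card_filter_add_card_filter_not, card_univ]
  have hne : ∀ j ∈ ({j | q j ≠ c} : Finset ι), g (q j) = g a := fun j hj =>
    congrArg g ((hq j).resolve_right (mem_filter.mp hj).2)
  rw [← sum_filter_add_sum_filter_not univ (q · = c), sum_congr rfl hne,
    sum_congr rfl fun j hj => congrArg g (mem_filter.mp hj).2, sum_const, sum_const,
    nsmul_eq_mul, nsmul_eq_mul, hcard]

end TwoValued

namespace Matrix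

variable {m n R : Type*} [Fintype n]

theorem card_mul_eq_card_of_sum_col_eq_one [Fintype m] [CommRing R] (Q : Matrix m n R) {r : R}
    (hcol : ∀ j, ∑ i, Q i j = 1) (hrow : ∀ i, ∑ j, Q i j = r) :
    Fintype.card m * r = Fintype.card n := by
  calc (Fintype.card m : R) * r = ∑ i, ∑ j, Q i j := by simp [hrow]
    _ = Fintype.card n := by simp [sum_comm (f := fun i j => Q i j), hcol]

theorem mulVec_const_of_sum_row_eq [CommRing R] (Q : Matrix m n R) {r : R}
    (hrow : ∀ i, ∑ j, Q i j = r) (c : R) : Q *ᵥ (fun _ => c) = fun _ => r * c := by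
  funext i
  simp [mulVec, dotProduct, ← sum_mul, hrow]

theorem trace_transpose_mul_self [Fintype m] [CommSemiring R] (Q : Matrix m n R) :
    (Qᵀ * Q).trace = ∑ i, ∑ j, Q i j ^ 2 := by
  simp [trace, mul_apply, sq, sum_comm (f := fun j i => Q i j * Q i j)]

theorem trace_mul_inv_diagonal_const_mul [Fintype m] [DecidableEq m] [Field R] {c : R}
    (hc : c ≠ 0) (P : Matrix n m R) (Q : Matrix m n R) :
    (P * (diagonal fun _ : m => c)⁻¹ * Q).trace = c⁻¹ * (P * Q).trace := by
  have hinv : (diagonal fun _ : m => c)⁻¹ = c⁻¹ • 1 := by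
    rw [smul_one_eq_diagonal]
    exact inv_eq_left_inv (by simp [diagonal_mul_diagonal, hc])
  rw [hinv, Matrix.mul_smul, Matrix.mul_one, Matrix.smul_mul, trace_smul, smul_eq_mul]

end Matrix

theorem stmt_13_general (ε : ℝ) (b v k : ℕ) (hv : 2 ≤ v) (s : ℝ)
    (Q : Matrix (Fin b) (Fin v) ℝ)
    (hent : ∀ i j, Q i j = s ∨ Q i j = s * Real.exp ε)
    (hcol : ∀ j, ∑ i, Q i j = 1)
    (hrow : ∀ i, (Finset.univ.filter fun j => Q i j = s * Real.exp ε).card = k) :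
    let f : ℝ → ℝ := fun x =>
      (v : ℝ) ^ 2 * (x * Real.exp (2 * ε) + (v : ℝ) - x) / ((x * (Real.exp ε - 1) + v) ^ 2)
    s = (v : ℝ) / ((b : ℝ) * ((v : ℝ) + (k : ℝ) * (Real.exp ε - 1))) ∧
    (b : ℝ) * (Qᵀ * Q).trace = f k ∧
    (Qᵀ * (Matrix.diagonal (Q.mulVec fun _ => (1 : ℝ) / v))⁻¹ * Q).trace = f k := by
  intro f
  have hrowsum (i) : ∑ j, Q i j = s * (v + k * (exp ε - 1)) := by
    rw [sum_comp_eq_of_two_valued (hent i) fun x => x, hrow i, Fintype.card_fin]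
    ring
  have hrowsq (i) : ∑ j, Q i j ^ 2 = s ^ 2 * (k * exp (2 * ε) + v - k) := by
    rw [sum_comp_eq_of_two_valued (hent i) (· ^ 2), hrow i, Fintype.card_fin, two_mul, exp_add]
    ring
  have htotal : b * (s * (v + k * (exp ε - 1))) = v := by
    simpa using Q.card_mul_eq_card_of_sum_col_eq_one hcol hrowsum
  have hv0 : (v : ℝ) ≠ 0 := by positivity
  have hprod : (b : ℝ) * (s * (v + k * (exp ε - 1))) ≠ 0 := by rwa [htotal]
  rw [mul_ne_zero_iff, mul_ne_zero_iff] at hprod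
  obtain ⟨hb0, -, hD0⟩ := hprod
  have hs : s = v / (b * (v + k * (exp ε - 1))) := by
    rw [eq_div_iff (mul_ne_zero hb0 hD0)]
    linear_combination htotal
  have htrace : (b : ℝ) * (Qᵀ * Q).trace = f k := by
    rw [trace_transpose_mul_self, sum_congr rfl fun i _ => hrowsq i, sum_const, card_univ,
      Fintype.card_fin, nsmul_eq_mul, hs]
    simp only [f, add_comm _ (v : ℝ)]
    field_simp
  refine ⟨hs, htrace, ?_⟩
  have hμ : Q *ᵥ (fun _ => 1 / (v : ℝ)) = fun _ => 1 / (b : ℝ) := by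
    rw [Q.mulVec_const_of_sum_row_eq hrowsum]
    funext
    field_simp
    linear_combination htotal
  rw [hμ, trace_mul_inv_diagonal_const_mul (by positivity), one_div, inv_inv, htrace]

/-- for a binary-valued ε-LDP transition probability matrix (entries in
`{s, s·e^ε}`, column sums 1, exactly `k` large entries in each row) one has
`s = v/(b(v + k(e^ε-1)))` and `b·tr(QᵀQ) = f(k)` where
`f(x) = v²(x·e^{2ε} + v - x)/((x(e^ε-1) + v)²)`; equivalently, with `μ = Q·(1/v)·1_v`
the (uniform) induced output distribution, `tr(Qᵀ·D_μ⁻¹·Q) = f(k)`. -/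
theorem stmt_13 (ε : ℝ) (hε : 0 < ε) (b v k : ℕ) (hb : 1 ≤ b) (hv : 2 ≤ v)
    (hk1 : 1 ≤ k) (hkv : k ≤ v - 1) (s : ℝ) (hs : 0 < s)
    (Q : Matrix (Fin b) (Fin v) ℝ)
    (hent : ∀ i j, Q i j = s ∨ Q i j = s * Real.exp ε)
    (hcol : ∀ j, ∑ i, Q i j = 1)
    (hrow : ∀ i, (Finset.univ.filter fun j => Q i j = s * Real.exp ε).card = k) :
    let f : ℝ → ℝ := fun x =>
      (v : ℝ) ^ 2 * (x * Real.exp (2 * ε) + (v : ℝ) - x) / ((x * (Real.exp ε - 1) + v) ^ 2)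
    s = (v : ℝ) / ((b : ℝ) * ((v : ℝ) + (k : ℝ) * (Real.exp ε - 1))) ∧
    (b : ℝ) * (Qᵀ * Q).trace = f k ∧
    (Qᵀ * (Matrix.diagonal (Q.mulVec fun _ => (1 : ℝ) / v))⁻¹ * Q).trace = f k :=
  stmt_13_general ε b v k hv s Q hent hcol hrow
end
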